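/- Let T be a finite tree with positive edge weights and ρ > 0 under the postal model, and let B_Ctr = {u ∈ V(T) : b_time(u,T) ≤ b_time(v,T) for all v ∈ V(T)} be the set of broadcast centers. Then the subgraph of T induced by B_Ctr is a star, i.e., it has at most two vertices, or exactly one vertex of degree greater than one. -/

import Mathlib

/-!
Common definitions for the postal-model broadcasting problem on weighted trees.
-/

open SimpleGraph

namespace Postal

attribute [local instance] Classical.propDecidable

variable {V : Type*} [Fintype V] [DecidableEq V] (G : SimpleGraph V)

/-- The unique path (as a walk) between two vertices of a tree. -/
noncomputable def tPath (hG : G.IsTree) (u v : V) : G.Walk u v :=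
  (hG.existsUnique_path u v).exists.choose

/-- `z` lies in the open branch `O(x,y)`: the component of `T - x` containing `y`. -/
def inO (x y z : V) : Prop := ∃ p : G.Walk y z, x ∉ p.support

/-- The open branch `O(x,y)`. -/
def Obr (x y : V) : Set V := {z | inO G x y z}

/-- The closed branch `B(x,y) = T - O(x,y)` (it contains `x`). -/
def Bbr (x y : V) : Set V := {z | ¬ inO G x y z}

/-- The parent of `z` with respect to the root `u`: the penultimate vertex on the
unique `u`-to-`z` path. -/
noncomputable def parent (hG : G.IsTree) (u z : V) : V :=
  (tPath G hG u z).getVert ((tPath G hG u z).length - 1)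

/-- The receive time of `z` under schedule `σ` when `u` originates the message:
along the unique `u`-to-`z` path, each vertex is contacted in its slot `σ`,
contributing `σ·ρ` connection time plus the edge weight. -/
noncomputable def recvTime (hG : G.IsTree) (w : V → V → ℝ) (ρ : ℝ) (σ : V → ℕ) (u z : V) : ℝ :=
  ((tPath G hG u z).darts.map (fun d => (σ d.toProd.2 : ℝ) * ρ + w d.toProd.1 d.toProd.2)).sum

/-- A schedule `σ` is valid for source `u` broadcasting over the vertex set `S`:
every non-source vertex gets a slot `≥ 1`, and distinct vertices with the same
parent get distinct slots (a sender contacts its neighbors sequentially). -/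
def Valid (hG : G.IsTree) (σ : V → ℕ) (u : V) (S : Set V) : Prop :=
  (∀ z ∈ S, z ≠ u → 1 ≤ σ z) ∧
  (∀ z₁ ∈ S, ∀ z₂ ∈ S, z₁ ≠ u → z₂ ≠ u → z₁ ≠ z₂ →
    parent G hG u z₁ = parent G hG u z₂ → σ z₁ ≠ σ z₂)

/-- The minimum broadcast time for `u` to broadcast a message over the subtree
induced by `S` under the postal model with latency `ρ`. -/
noncomputable def bTime (hG : G.IsTree) (w : V → V → ℝ) (ρ : ℝ) (u : V) (S : Set V) : ℝ :=
  sInf {m | ∃ σ, Valid G hG σ u S ∧ m = sSup ((recvTime G hG w ρ σ u) '' S)}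

/-- Broadcast time over the whole tree. -/
noncomputable def bTimeT (hG : G.IsTree) (w : V → V → ℝ) (ρ : ℝ) (u : V) : ℝ :=
  bTime G hG w ρ u Set.univ

/-- The set of broadcast centers. -/
def BCtr (hG : G.IsTree) (w : V → V → ℝ) (ρ : ℝ) : Set V :=
  {u | ∀ v, bTimeT G hG w ρ u ≤ bTimeT G hG w ρ v}

/-- A prime broadcast center. -/
def IsPrime (hG : G.IsTree) (w : V → V → ℝ) (ρ : ℝ) (κ : V) : Prop :=
  κ ∈ BCtr G hG w ρ ∧
  ∀ u, G.Adj κ u → bTime G hG w ρ u (Bbr G u κ) ≤ bTime G hG w ρ κ (Bbr G κ u)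

/-- Hop distance: number of edges on the unique path. -/
noncomputable def hop (hG : G.IsTree) (x y : V) : ℕ := (tPath G hG x y).length

/-- Total weight of the unique `x`-to-`y` path. -/
noncomputable def pw (hG : G.IsTree) (w : V → V → ℝ) (x y : V) : ℝ :=
  ((tPath G hG x y).darts.map (fun d => w d.toProd.1 d.toProd.2)).sum

/-- Symmetric weight function. -/
def Wsymm (w : V → V → ℝ) : Prop := ∀ a b, w a b = w b a

/-- Positive weights on edges. -/
def Wpos (w : V → V → ℝ) : Prop := ∀ a b, G.Adj a b → 0 < w a b

/-- A scenario: a symmetric weight assignment within the uncertainty intervals. -/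
def Scenario (lo hi : V → V → ℝ) (w : V → V → ℝ) : Prop :=
  (∀ a b, w a b = w b a) ∧ ∀ a b, G.Adj a b → lo a b ≤ w a b ∧ w a b ≤ hi a b

/-- The maximum regret of `x`. -/
noncomputable def maxRegret (hG : G.IsTree) (lo hi : V → V → ℝ) (ρ : ℝ) (x : V) : ℝ :=
  sSup {r | ∃ w y, Scenario G lo hi w ∧ r = bTimeT G hG w ρ x - bTimeT G hG w ρ y}

/-- `w` is a worst-case scenario of the tree with respect to `x`. -/
def WorstCase (hG : G.IsTree) (lo hi : V → V → ℝ) (ρ : ℝ) (x : V) (w : V → V → ℝ) : Prop :=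
  Scenario G lo hi w ∧
  ∃ y, bTimeT G hG w ρ x - bTimeT G hG w ρ y = maxRegret G hG lo hi ρ x

/-- An edge `(a,b)` lies on the unique `x`-to-`y` path. -/
def onPath (hG : G.IsTree) (x y a b : V) : Prop :=
  a ∈ (tPath G hG x y).support ∧ b ∈ (tPath G hG x y).support

/-- The base scenario `α_{x,y}`: weight `hi` on the `x`-to-`y` path and on edges of
`B(y,x)`, weight `lo` elsewhere. -/
noncomputable def baseScenario (hG : G.IsTree) (lo hi : V → V → ℝ) (x y : V) : V → V → ℝ :=
  fun a b =>
    if onPath G hG x y a b ∨ (a ∈ Bbr G y x ∧ b ∈ Bbr G y x) then hi a b else lo a b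

/-- The value `w(y,v) + b_time(v, B(v,y))` of a neighbor `v` of `y`. -/
noncomputable def nval (hG : G.IsTree) (w : V → V → ℝ) (ρ : ℝ) (y v : V) : ℝ :=
  w y v + bTime G hG w ρ v (Bbr G v y)

/-- Scenario `β^j_{x,y}`: agrees with `α_{x,y}`, except that every edge in
`{(y,u_k)} ∪ E(B(u_k,y))` for `k > j` (with `u` the 1-based sorted enumeration
of the neighbors of `y` in `B(y,x)`) gets weight `lo`. -/
noncomputable def betaScenario (hG : G.IsTree) (lo hi : V → V → ℝ) (x y : V) {h : ℕ}
    (u : Fin h → V) (j : ℕ) : V → V → ℝ :=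
  fun a b =>
    if ∃ k : Fin h, j < (k : ℕ) + 1 ∧
        ((a = y ∧ b = u k) ∨ (b = y ∧ a = u k) ∨
          (a ∈ Bbr G (u k) y ∧ b ∈ Bbr G (u k) y)) then
      lo a b
    else baseScenario G hG lo hi x y a b

/-- Scenario `γ^j_{x,y}`: agrees with `α_{x,y}` on the edges in
`⋃_{1 ≤ k ≤ j} ({(y,u_k)} ∪ E(B(u_k,y)))` and with the scenario `s` elsewhere. -/
noncomputable def gammaScenario (hG : G.IsTree) (lo hi : V → V → ℝ) (s : V → V → ℝ)
    (x y : V) {h : ℕ} (u : Fin h → V) (j : ℕ) : V → V → ℝ :=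
  fun a b =>
    if ∃ k : Fin h, (k : ℕ) + 1 ≤ j ∧
        ((a = y ∧ b = u k) ∨ (b = y ∧ a = u k) ∨
          (a ∈ Bbr G (u k) y ∧ b ∈ Bbr G (u k) y)) then
      baseScenario G hG lo hi x y a b
    else s a b

/-- The set of neighbors of `y` inside the branch `B(y,x)`. -/
def nbrIn (x y : V) : Set V := {v | G.Adj y v ∧ v ∈ Bbr G y x}

end Postal

/-!
Write `β(x, y) = b_time(y, B(y, x))` for adjacent `x, y`. Broadcasting from `x` costs at least
`ρ + w(x, y) + β(x, y)` for every neighbour `y`, since `y` is called in some slot `≥ 1`; and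
broadcasting from `κ` costs at most `max (ρ + w(κ, y) + β(κ, y)) (ρ + β(y, κ))`: call `y` first,
then run a schedule of `κ`'s own branch one slot later. Hence `β` strictly decreases along edges
pointing away from a vertex, and a neighbour `y` of `κ` with `β(y, κ) < β(κ, y)` broadcasts at least
as fast as `κ`.

A broadcast center `κ` minimising `max_y (w(κ, y) + β(κ, y))` is therefore prime
(`β(κ, y) ≤ β(y, κ)` for all neighbours `y`): otherwise that neighbour would be a center with a
smaller value. For a center `x` at distance `≥ 2` from a prime `κ`, descending along the path from
`x` to `κ` gives `b_time(x) > ρ + w(κ, y') + β(y', κ) ≥ b_time(κ)`. So all centers lie in the closed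
neighbourhood of `κ`, and since a tree has no triangles they induce a star.
-/

namespace Postal

variable {V : Type*} {G : SimpleGraph V}

theorem _root_.SimpleGraph.Walk.IsPath.ne_of_mem_support_tail {u v a : V} {p : G.Walk u v}
    (hp : p.IsPath) (ha : a ∈ p.support.tail) : a ≠ u := by
  rintro rfl
  have h := hp.support_nodup
  rw [← p.cons_tail_support] at h
  exact (List.nodup_cons.mp h).1 ha

theorem existsUnique_one_lt_ncard_adj {α : Type*} [Finite α] {H : SimpleGraph α}
    (hH : H.CliqueFree 3) {S : Set α} (hS : 2 < S.ncard) {κ : α} (hκ : κ ∈ S)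
    (hstar : ∀ x ∈ S, x ≠ κ → H.Adj κ x) :
    ∃! c, c ∈ S ∧ 1 < {u | u ∈ S ∧ H.Adj c u}.ncard := by
  refine ⟨κ, ⟨hκ, ?_⟩, fun c ⟨hc, hdeg⟩ => by_contra fun hcκ => ?_⟩
  · have hsub : S \ {κ} ⊆ {u | u ∈ S ∧ H.Adj κ u} := fun u ⟨hu, huκ⟩ => ⟨hu, hstar u hu huκ⟩
    have := Set.ncard_le_ncard hsub
    rw [Set.ncard_sdiff_singleton_of_mem hκ] at this
    omega
  · have hsub : {u | u ∈ S ∧ H.Adj c u} ⊆ {κ} := by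
      rintro u ⟨hu, hcu⟩
      by_contra huκ
      classical
      exact hH {κ, c, u} (is3Clique_triple_iff.mpr ⟨hstar c hc hcκ, hstar u hu huκ, hcu⟩)
    have := Set.ncard_le_ncard hsub
    rw [Set.ncard_singleton] at this
    omega

section Broadcast

variable (hG : G.IsTree) {w : V → V → ℝ} {ρ : ℝ}

theorem tPath_isPath (u v : V) : (tPath G hG u v).IsPath :=
  (hG.existsUnique_path u v).exists.choose_spec

theorem eq_tPath {u v : V} {p : G.Walk u v} (hp : p.IsPath) : p = tPath G hG u v :=
  (hG.existsUnique_path u v).unique hp (tPath_isPath hG u v)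

theorem tPath_self (u : V) : tPath G hG u u = .nil :=
  (eq_tPath hG .nil).symm

theorem tPath_of_adj {u v : V} (h : G.Adj u v) : tPath G hG u v = .cons h .nil :=
  (eq_tPath hG (by simp [h.ne])).symm

theorem mem_Bbr_self (x y : V) : y ∈ Bbr G y x :=
  fun ⟨p, hp⟩ => hp p.end_mem_support

theorem notMem_Bbr {x y : V} (hne : y ≠ x) : x ∉ Bbr G y x :=
  fun h => h ⟨.nil, by simpa using hne⟩

theorem inO_of_mem_support {u v a : V} {p : G.Walk u v} (hp : p.IsPath) (ha : a ∈ p.support)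
    (hau : a ≠ u) : inO G u a v := by
  classical
  exact ⟨(p.reverse.takeUntil a (by simpa using ha)).reverse, by
    simpa using p.reverse.endpoint_notMem_support_takeUntil hp.reverse _ hau.symm⟩

theorem tPath_cons {x y z : V} (hxy : G.Adj x y) (hz : z ∈ Bbr G y x) :
    tPath G hG x z = .cons hxy (tPath G hG y z) := by
  have hx : x ∉ (tPath G hG y z).support :=
    fun hx => hz (inO_of_mem_support (tPath_isPath hG y z) hx hxy.ne)
  exact (eq_tPath hG ((tPath_isPath hG y z).cons hx)).symm

theorem mem_Bbr_of_mem_support_tPath {a b z v : V} (hz : z ∈ Bbr G a b)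
    (hv : v ∈ (tPath G hG a z).support) : v ∈ Bbr G a b := by
  rintro ⟨r, hr⟩
  obtain rfl | hva := eq_or_ne v a
  · exact hr r.end_mem_support
  obtain ⟨q, hq⟩ := inO_of_mem_support (tPath_isPath hG a z) hv hva
  exact hz ⟨r.append q, by simp [hr, hq]⟩

include hG in
theorem notMem_Bbr_iff {x y z : V} (hxy : G.Adj x y) : z ∉ Bbr G x y ↔ z ∈ Bbr G y x := by
  classical
  simp only [Bbr, Set.mem_ofPred_eq, not_not]
  constructor
  · rintro ⟨r, hr⟩ ⟨s, hs⟩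
    have hr' : x ∉ r.toPath.val.support := fun h => hr (r.support_toPath_subset_support h)
    have h₁ := eq_tPath hG (p := .cons hxy r.toPath.val) (r.toPath.2.cons hr')
    have h₂ := eq_tPath hG s.toPath.2
    apply hs (s.support_toPath_subset_support _)
    rw [h₂, ← h₁]
    simp
  · intro hz
    have hpath := tPath_isPath hG x z
    rw [tPath_cons hG hxy hz, Walk.cons_isPath_iff] at hpath
    exact ⟨tPath G hG y z, hpath.2⟩

include hG in
theorem Bbr_subset_Bbr {x y y' : V} (hxy : G.Adj x y) (hxy' : G.Adj x y') (hne : y ≠ y') :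
    Bbr G y x ⊆ Bbr G x y' := by
  intro z hz
  by_contra hz'
  have h := congrArg Walk.snd
    ((tPath_cons hG hxy hz).symm.trans (tPath_cons hG hxy' ((notMem_Bbr_iff hG hxy').mp hz')))
  simp only [Walk.snd_cons] at h
  exact hne h

theorem parent_of_adj {x y : V} (hxy : G.Adj x y) : parent G hG x y = x := by
  simp [parent, tPath_of_adj hG hxy]

theorem parent_mem_Bbr {a b z : V} (hz : z ∈ Bbr G a b) : parent G hG a z ∈ Bbr G a b :=
  mem_Bbr_of_mem_support_tPath hG hz (Walk.getVert_mem_support _ _)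

theorem parent_eq_parent {x y z : V} (hxy : G.Adj x y) (hz : z ∈ Bbr G y x) (hzy : z ≠ y) :
    parent G hG x z = parent G hG y z := by
  have hl : (tPath G hG y z).length ≠ 0 :=
    fun h => hzy (Walk.eq_of_length_eq_zero h).symm
  simp only [parent, tPath_cons hG hxy hz, Walk.length_cons, Nat.add_sub_cancel,
    Walk.getVert_cons _ hxy hl]

theorem recvTime_self (σ : V → ℕ) (u : V) : recvTime G hG w ρ σ u u = 0 := by
  simp [recvTime, tPath_self hG]

theorem recvTime_cons (σ : V → ℕ) {x y z : V} (hxy : G.Adj x y) (hz : z ∈ Bbr G y x) :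
    recvTime G hG w ρ σ x z = σ y * ρ + w x y + recvTime G hG w ρ σ y z := by
  simp only [recvTime, tPath_cons hG hxy hz, Walk.darts_cons, List.map_cons, List.sum_cons,
    add_assoc]

theorem recvTime_congr {σ σ' : V → ℕ} {u z : V}
    (h : ∀ a ∈ (tPath G hG u z).support.tail, σ a = σ' a) :
    recvTime G hG w ρ σ u z = recvTime G hG w ρ σ' u z := by
  unfold recvTime
  congr 1
  refine List.map_congr_left fun d hd => ?_
  rw [h _ (by simpa only [← Walk.map_snd_darts] using List.mem_map_of_mem hd)]

include hG in
theorem exists_adj_mem_Bbr {κ z : V} (hzκ : z ≠ κ) : ∃ v, G.Adj κ v ∧ z ∈ Bbr G v κ := by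
  obtain ⟨v, h, q, hq⟩ := Walk.exists_eq_cons_of_ne hzκ.symm (tPath G hG κ z)
  have hpath := tPath_isPath hG κ z
  rw [hq, Walk.cons_isPath_iff] at hpath
  exact ⟨v, h, (notMem_Bbr_iff hG h).mp fun hz => hz ⟨q, hpath.2⟩⟩

open Classical in
theorem recvTime_shift (σ : V → ℕ) {κ z : V} (hzκ : z ≠ κ) :
    recvTime G hG w ρ (fun a => σ a + if parent G hG κ a = κ then 1 else 0) κ z
      = recvTime G hG w ρ σ κ z + ρ := by
  obtain ⟨v, hκv, hz⟩ := exists_adj_mem_Bbr hG hzκ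
  have htail : recvTime G hG w ρ (fun a => σ a + if parent G hG κ a = κ then 1 else 0) v z
      = recvTime G hG w ρ σ v z := by
    refine recvTime_congr hG fun a ha => ?_
    have hav := (tPath_isPath hG v z).ne_of_mem_support_tail ha
    have haB := mem_Bbr_of_mem_support_tPath hG hz (List.mem_of_mem_tail ha)
    have hpar : parent G hG κ a ≠ κ := by
      rw [parent_eq_parent hG hκv haB hav]
      exact fun h => notMem_Bbr hκv.ne' (h ▸ parent_mem_Bbr hG haB)
    simp [hpar]
  rw [recvTime_cons hG _ hκv hz, recvTime_cons hG _ hκv hz, htail, parent_of_adj hG hκv]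
  simp only [↓reduceIte, Nat.cast_add, Nat.cast_one]
  ring

theorem Valid.of_Bbr {σ : V → ℕ} {x y : V} {S : Set V} (hσ : Valid G hG σ x S)
    (hxy : G.Adj x y) (hsub : Bbr G y x ⊆ S) : Valid G hG σ y (Bbr G y x) := by
  have hx : ∀ z ∈ Bbr G y x, z ≠ x := fun z hz h => notMem_Bbr hxy.ne' (h ▸ hz)
  refine ⟨fun z hz _ => hσ.1 z (hsub hz) (hx z hz), fun z₁ hz₁ z₂ hz₂ h₁ h₂ hne hpar => ?_⟩
  refine hσ.2 z₁ (hsub hz₁) z₂ (hsub hz₂) (hx z₁ hz₁) (hx z₂ hz₂) hne ?_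
  rwa [parent_eq_parent hG hxy hz₁ h₁, parent_eq_parent hG hxy hz₂ h₂]

open Classical in
noncomputable def callFirst (G : SimpleGraph V) (hG : G.IsTree) (κ y : V) (σ₁ σ₂ : V → ℕ) :
    V → ℕ := fun z =>
  if z = y then 1
  else if z ∈ Bbr G y κ then σ₁ z
  else σ₂ z + if parent G hG κ z = κ then 1 else 0

theorem valid_callFirst {κ y : V} (hκy : G.Adj κ y) {σ₁ σ₂ : V → ℕ}
    (h₁ : Valid G hG σ₁ y (Bbr G y κ)) (h₂ : Valid G hG σ₂ κ (Bbr G κ y)) :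
    Valid G hG (callFirst G hG κ y σ₁ σ₂) κ Set.univ := by
  have hB₂ : ∀ z, z ∉ Bbr G y κ → z ∈ Bbr G κ y := fun z => (notMem_Bbr_iff hG hκy.symm).mp
  have side : ∀ z, z ≠ y → (parent G hG κ z ∈ Bbr G y κ ↔ z ∈ Bbr G y κ) := by
    intro z hzy
    by_cases hz : z ∈ Bbr G y κ
    · rw [parent_eq_parent hG hκy hz hzy]
      exact iff_of_true (parent_mem_Bbr hG hz) hz
    · exact iff_of_false ((notMem_Bbr_iff hG hκy.symm).mpr (parent_mem_Bbr hG (hB₂ z hz))) hz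
  have first : ∀ z, z ≠ κ → z ≠ y → parent G hG κ z = parent G hG κ y →
      callFirst G hG κ y σ₁ σ₂ z ≠ callFirst G hG κ y σ₁ σ₂ y := by
    intro z hzκ hzy hpar
    rw [parent_of_adj hG hκy] at hpar
    have hz : z ∉ Bbr G y κ := by
      rw [← side z hzy, hpar]
      exact notMem_Bbr hκy.ne'
    have := h₂.1 z (hB₂ z hz) hzκ
    simp only [callFirst, hzy, ↓reduceIte, hz, hpar, ne_eq, Nat.add_eq_right]
    omega
  refine ⟨fun z _ hzκ => ?_, fun z₁ _ z₂ _ hz₁ hz₂ hne hpar => ?_⟩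
  · unfold callFirst
    split_ifs with hzy hz
    · exact le_rfl
    · exact h₁.1 z hz hzy
    all_goals have := h₂.1 z (hB₂ z hz) hzκ; omega
  obtain rfl | hy₁ := eq_or_ne z₁ y
  · exact (first z₂ hz₂ hne.symm hpar.symm).symm
  obtain rfl | hy₂ := eq_or_ne z₂ y
  · exact first z₁ hz₁ hy₁ hpar
  have hsame : z₁ ∈ Bbr G y κ ↔ z₂ ∈ Bbr G y κ := by rw [← side z₁ hy₁, hpar, side z₂ hy₂]
  by_cases hB : z₁ ∈ Bbr G y κ
  · have hB' := hsame.mp hB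
    simp only [callFirst, if_neg hy₁, if_neg hy₂, if_pos hB, if_pos hB']
    refine h₁.2 z₁ hB z₂ hB' hy₁ hy₂ hne ?_
    rwa [← parent_eq_parent hG hκy hB hy₁, ← parent_eq_parent hG hκy hB' hy₂]
  · have hB' := mt hsame.mpr hB
    have := h₂.2 z₁ (hB₂ z₁ hB) z₂ (hB₂ z₂ hB') hz₁ hz₂ hne hpar
    simp only [callFirst, if_neg hy₁, if_neg hy₂, if_neg hB, if_neg hB']
    rw [hpar]
    omega

theorem recvTime_callFirst_of_mem {κ y z : V} (hκy : G.Adj κ y) (hz : z ∈ Bbr G y κ)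
    (σ₁ σ₂ : V → ℕ) :
    recvTime G hG w ρ (callFirst G hG κ y σ₁ σ₂) κ z = ρ + w κ y + recvTime G hG w ρ σ₁ y z := by
  rw [recvTime_cons hG _ hκy hz, recvTime_congr hG (σ' := σ₁)]
  · simp [callFirst]
  · intro a ha
    have hay := (tPath_isPath hG y z).ne_of_mem_support_tail ha
    simp [callFirst, hay, mem_Bbr_of_mem_support_tPath hG hz (List.mem_of_mem_tail ha)]

theorem recvTime_callFirst_of_notMem {κ y z : V} (hκy : G.Adj κ y) (hz : z ∉ Bbr G y κ)
    (hzκ : z ≠ κ) (σ₁ σ₂ : V → ℕ) :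
    recvTime G hG w ρ (callFirst G hG κ y σ₁ σ₂) κ z = recvTime G hG w ρ σ₂ κ z + ρ := by
  rw [← recvTime_shift hG σ₂ hzκ]
  refine recvTime_congr hG fun a ha => ?_
  have ha₂ := mem_Bbr_of_mem_support_tPath hG ((notMem_Bbr_iff hG hκy.symm).mp hz)
    (List.mem_of_mem_tail ha)
  have ha₁ : a ∉ Bbr G y κ := (notMem_Bbr_iff hG hκy.symm).mpr ha₂
  have hay : a ≠ y := by
    rintro rfl
    exact ha₁ (mem_Bbr_self κ a)
  simp [callFirst, hay, ha₁]

section Finite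

variable [Finite V]

theorem exists_valid (u : V) (S : Set V) : ∃ σ, Valid G hG σ u S := by
  obtain ⟨n, ⟨e⟩⟩ := Finite.exists_equiv_fin V
  refine ⟨fun z => e z + 1, fun _ _ _ => le_add_self, fun z₁ _ z₂ _ _ _ hne _ h => hne ?_⟩
  exact e.injective (Fin.ext (by simpa using h))

theorem recvTime_le_sSup (σ : V → ℕ) {u z : V} {S : Set V} (hz : z ∈ S) :
    recvTime G hG w ρ σ u z ≤ sSup (recvTime G hG w ρ σ u '' S) :=
  le_csSup (S.toFinite.image _).bddAbove (Set.mem_image_of_mem _ hz)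

theorem bTime_le_sSup {σ : V → ℕ} {u : V} {S : Set V} (hu : u ∈ S) (hσ : Valid G hG σ u S) :
    bTime G hG w ρ u S ≤ sSup (recvTime G hG w ρ σ u '' S) := by
  refine csInf_le ⟨0, ?_⟩ ⟨σ, hσ, rfl⟩
  rintro _ ⟨σ', -, rfl⟩
  simpa [recvTime_self] using recvTime_le_sSup hG (w := w) (ρ := ρ) σ' (u := u) hu

theorem le_bTime {u : V} {S : Set V} {c : ℝ}
    (h : ∀ σ, Valid G hG σ u S → c ≤ sSup (recvTime G hG w ρ σ u '' S)) :
    c ≤ bTime G hG w ρ u S := by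
  obtain ⟨σ, hσ⟩ := exists_valid hG u S
  refine le_csInf ⟨_, σ, hσ, rfl⟩ ?_
  rintro _ ⟨σ, hσ, rfl⟩
  exact h σ hσ

theorem le_max_add_bTime {u₁ u₂ : V} {S₁ S₂ : Set V} {C c₁ c₂ : ℝ}
    (h : ∀ σ₁, Valid G hG σ₁ u₁ S₁ → ∀ σ₂, Valid G hG σ₂ u₂ S₂ →
      C ≤ max (c₁ + sSup (recvTime G hG w ρ σ₁ u₁ '' S₁))
        (c₂ + sSup (recvTime G hG w ρ σ₂ u₂ '' S₂))) :
    C ≤ max (c₁ + bTime G hG w ρ u₁ S₁) (c₂ + bTime G hG w ρ u₂ S₂) := by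
  by_contra! hC
  rw [max_lt_iff] at hC
  obtain ⟨σ₁, hσ₁⟩ := exists_valid hG u₁ S₁
  obtain ⟨σ₂, hσ₂⟩ := exists_valid hG u₂ S₂
  obtain ⟨_, ⟨τ₁, hτ₁, rfl⟩, h₁⟩ :=
    exists_lt_of_csInf_lt (by exact ⟨_, σ₁, hσ₁, rfl⟩) (lt_sub_iff_add_lt'.mpr hC.1)
  obtain ⟨_, ⟨τ₂, hτ₂, rfl⟩, h₂⟩ :=
    exists_lt_of_csInf_lt (by exact ⟨_, σ₂, hσ₂, rfl⟩) (lt_sub_iff_add_lt'.mpr hC.2)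
  rcases le_max_iff.mp (h τ₁ hτ₁ τ₂ hτ₂) with hle | hle <;> linarith

theorem add_bTime_Bbr_le_bTime (hρ : 0 ≤ ρ) {x y : V} {S : Set V} (hxy : G.Adj x y)
    (hsub : Bbr G y x ⊆ S) :
    ρ + w x y + bTime G hG w ρ y (Bbr G y x) ≤ bTime G hG w ρ x S := by
  refine le_bTime hG fun σ hσ => ?_
  have hy := mem_Bbr_self (G := G) x y
  have hσy : (1 : ℝ) ≤ σ y := by exact_mod_cast hσ.1 y (hsub hy) hxy.ne'
  have hrecv : sSup (recvTime G hG w ρ σ y '' Bbr G y x)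
      ≤ sSup (recvTime G hG w ρ σ x '' S) - (ρ + w x y) := by
    refine csSup_le ⟨_, Set.mem_image_of_mem _ hy⟩ ?_
    rintro _ ⟨z, hz, rfl⟩
    have := recvTime_le_sSup hG (w := w) (ρ := ρ) σ (u := x) (hsub hz)
    rw [recvTime_cons hG σ hxy hz] at this
    nlinarith
  linarith [bTime_le_sSup hG (w := w) (ρ := ρ) hy (hσ.of_Bbr hG hxy hsub)]

theorem add_bTime_Bbr_le_bTimeT (hρ : 0 ≤ ρ) {x y : V} (hxy : G.Adj x y) :
    ρ + w x y + bTime G hG w ρ y (Bbr G y x) ≤ bTimeT G hG w ρ x :=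
  add_bTime_Bbr_le_bTime hG hρ hxy (Set.subset_univ _)

theorem bTimeT_le_max (hρ : 0 ≤ ρ) {κ y : V} (hκy : G.Adj κ y) :
    bTimeT G hG w ρ κ ≤ max (ρ + w κ y + bTime G hG w ρ y (Bbr G y κ))
      (ρ + bTime G hG w ρ κ (Bbr G κ y)) := by
  refine le_max_add_bTime hG fun σ₁ h₁ σ₂ h₂ => ?_
  have hκ := mem_Bbr_self (G := G) y κ
  refine (bTime_le_sSup hG (Set.mem_univ κ) (valid_callFirst hG hκy h₁ h₂)).trans ?_
  refine csSup_le ⟨_, Set.mem_image_of_mem _ (Set.mem_univ κ)⟩ ?_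
  rintro _ ⟨z, -, rfl⟩
  by_cases hz : z ∈ Bbr G y κ
  · rw [recvTime_callFirst_of_mem hG hκy hz]
    exact le_max_of_le_left (by linarith [recvTime_le_sSup hG (w := w) (ρ := ρ) σ₁ (u := y) hz])
  obtain rfl | hzκ := eq_or_ne z κ
  · have := recvTime_le_sSup hG (w := w) (ρ := ρ) σ₂ (u := z) hκ
    rw [recvTime_self] at this ⊢
    exact le_max_of_le_right (by linarith)
  · rw [recvTime_callFirst_of_notMem hG hκy hz hzκ]
    have := recvTime_le_sSup hG (w := w) (ρ := ρ) σ₂ (u := κ)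
      ((notMem_Bbr_iff hG hκy.symm).mp hz)
    exact le_max_of_le_right (by linarith)

theorem bTimeT_le_of_bTime_lt (hsym : Wsymm w) (hpos : Wpos G w) (hρ : 0 ≤ ρ) {u v : V}
    (huv : G.Adj u v) (hlt : bTime G hG w ρ u (Bbr G u v) < bTime G hG w ρ v (Bbr G v u)) :
    bTimeT G hG w ρ v ≤ bTimeT G hG w ρ u := by
  have hlow := add_bTime_Bbr_le_bTimeT hG (w := w) hρ huv
  refine (bTimeT_le_max hG hρ huv.symm).trans (max_le ?_ ?_)
  · linarith [hsym u v]
  · linarith [hpos u v huv]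

theorem exists_adj_add_bTime_le_of_isPath (hsym : Wsymm w) (hpos : Wpos G w) (hρ : 0 ≤ ρ)
    {x y κ : V} (p : G.Walk y κ) (hp : p.IsPath) (hxy : G.Adj x y) (hx : x ∉ p.support)
    (hyκ : y ≠ κ) :
    ∃ y', G.Adj κ y' ∧
      ρ + w κ y' + bTime G hG w ρ κ (Bbr G κ y') ≤ bTime G hG w ρ y (Bbr G y x) := by
  induction p generalizing x with
  | nil => exact absurd rfl hyκ
  | @cons y y₂ κ h q ih =>
    rw [Walk.cons_isPath_iff] at hp
    have hy₂x : y₂ ≠ x := by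
      rintro rfl
      simp at hx
    have hstep := add_bTime_Bbr_le_bTime hG (w := w) hρ h (Bbr_subset_Bbr hG h hxy.symm hy₂x)
    obtain rfl | hy₂κ := eq_or_ne y₂ κ
    · exact ⟨y, h.symm, by rwa [hsym]⟩
    · obtain ⟨y', hy', hle⟩ := ih hp.1 h hp.2 hy₂κ
      exact ⟨y', hy', by linarith [hpos y y₂ h]⟩

theorem IsPrime.adj_of_mem_BCtr (hsym : Wsymm w) (hpos : Wpos G w) (hρ : 0 ≤ ρ) {κ x : V}
    (hκ : IsPrime G hG w ρ κ) (hx : x ∈ BCtr G hG w ρ) (hxκ : x ≠ κ) : G.Adj κ x := by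
  by_contra hnadj
  obtain ⟨y, hxy, q, hq⟩ := Walk.exists_eq_cons_of_ne hxκ (tPath G hG x κ)
  have hpath := tPath_isPath hG x κ
  rw [hq, Walk.cons_isPath_iff] at hpath
  have hyκ : y ≠ κ := by
    rintro rfl
    exact hnadj hxy.symm
  obtain ⟨y', hκy', hdesc⟩ :=
    exists_adj_add_bTime_le_of_isPath hG hsym hpos hρ q hpath.1 hxy hpath.2 hyκ
  have hκ_le : bTimeT G hG w ρ κ ≤ ρ + w κ y' + bTime G hG w ρ κ (Bbr G κ y') :=
    (bTimeT_le_max hG hρ hκy').trans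
      (max_le (by linarith [hκ.2 y' hκy']) (by linarith [hpos κ y' hκy']))
  linarith [add_bTime_Bbr_le_bTimeT hG (w := w) hρ hxy, hx κ, hpos x y hxy]

noncomputable def maxNval (G : SimpleGraph V) (hG : G.IsTree) (w : V → V → ℝ) (ρ : ℝ) (x : V) :
    ℝ :=
  sSup (nval G hG w ρ x '' {v | G.Adj x v})

theorem nval_le_maxNval {x v : V} (hxv : G.Adj x v) : nval G hG w ρ x v ≤ maxNval G hG w ρ x :=
  le_csSup ((Set.toFinite _).image _).bddAbove (Set.mem_image_of_mem _ hxv)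

theorem maxNval_lt_nval (hsym : Wsymm w) (hpos : Wpos G w) (hρ : 0 ≤ ρ) {κ v : V}
    (hκv : G.Adj κ v) (hlt : bTime G hG w ρ κ (Bbr G κ v) < bTime G hG w ρ v (Bbr G v κ)) :
    maxNval G hG w ρ v < nval G hG w ρ κ v := by
  obtain ⟨z, hvz, hz⟩ : maxNval G hG w ρ v ∈ nval G hG w ρ v '' {z | G.Adj v z} :=
    Set.Nonempty.csSup_mem ⟨_, Set.mem_image_of_mem _ hκv.symm⟩ (Set.toFinite _)
  rw [← hz, nval, nval]
  obtain rfl | hzκ := eq_or_ne z κ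
  · linarith [hsym v z]
  · linarith [add_bTime_Bbr_le_bTime hG (w := w) hρ hvz (Bbr_subset_Bbr hG hvz hκv.symm hzκ),
      hpos κ v hκv]

theorem BCtr_nonempty [Nonempty V] : (BCtr G hG w ρ).Nonempty := by
  obtain ⟨c, -, hc⟩ :=
    Set.exists_min_image Set.univ (bTimeT G hG w ρ) Set.finite_univ Set.univ_nonempty
  exact ⟨c, fun v => hc v (Set.mem_univ v)⟩

theorem exists_isPrime [Nonempty V] (hsym : Wsymm w) (hpos : Wpos G w) (hρ : 0 ≤ ρ) :
    ∃ κ, IsPrime G hG w ρ κ := by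
  obtain ⟨κ, hκ, hmin⟩ :=
    Set.exists_min_image _ (maxNval G hG w ρ) (Set.toFinite _) (BCtr_nonempty hG)
  refine ⟨κ, hκ, fun v hκv => le_of_not_gt fun hlt => ?_⟩
  have hv : v ∈ BCtr G hG w ρ :=
    fun z => (bTimeT_le_of_bTime_lt hG hsym hpos hρ hκv hlt).trans (hκ z)
  exact (hmin v hv).not_gt
    ((maxNval_lt_nval hG hsym hpos hρ hκv hlt).trans_le (nval_le_maxNval hG hκv))

end Finite

end Broadcast

theorem stmt2_general {V : Type*} [Fintype V] (G : SimpleGraph V) (hG : G.IsTree)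
    (w : V → V → ℝ) (hsym : Wsymm w) (hpos : Wpos G w) (ρ : ℝ) (hρ : 0 < ρ) :
    (BCtr G hG w ρ).ncard ≤ 2 ∨
      ∃! c, c ∈ BCtr G hG w ρ ∧ 1 < {u | u ∈ BCtr G hG w ρ ∧ G.Adj c u}.ncard := by
  rcases le_or_gt (BCtr G hG w ρ).ncard 2 with h2 | h2
  · exact Or.inl h2
  have : Nonempty V := hG.connected.nonempty
  obtain ⟨κ, hκ⟩ := exists_isPrime hG hsym hpos hρ.le
  exact Or.inr (existsUnique_one_lt_ncard_adj (hG.isAcyclic.cliqueFree le_rfl) h2 hκ.1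
    fun x hx hxκ => hκ.adj_of_mem_BCtr hG hsym hpos hρ.le hx hxκ)

/-- The subgraph of `T` induced by the set of broadcast centers is
a star: it has at most two vertices, or exactly one vertex of (induced) degree
greater than one. -/
theorem stmt2 {V : Type*} [Fintype V] [DecidableEq V] (G : SimpleGraph V) (hG : G.IsTree)
    (w : V → V → ℝ) (hsym : Wsymm w) (hpos : Wpos G w) (ρ : ℝ) (hρ : 0 < ρ) :
    (BCtr G hG w ρ).ncard ≤ 2 ∨
      ∃! c, c ∈ BCtr G hG w ρ ∧ 1 < {u | u ∈ BCtr G hG w ρ ∧ G.Adj c u}.ncard :=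
  stmt2_general G hG w hsym hpos ρ hρ

end Postal
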